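/- Let ν_{N,k} be the probability measure on Fin r with ν({m}) = k_m/N, and let K be the r×r matrix with (N−1)K_{m,n} = k_n − 1 if n = m and (N−1)K_{m,n} = k_n if n ≠ m. Then for functions g, h : Fin r → ℝ, ⟨g, K h⟩_{L²(ν)} = Σ_{x ∈ V_{N,k}} g(x_1) h(x_N) μ_{N,k}(x), where μ_{N,k} is the uniform probability measure on the multislice V_{N,k} and N ≥ 2. -/

import Mathlib

open scoped Classical BigOperators

/-- The multislice: tuples `x : Fin N → Fin r` in which each value `m` is
attained exactly `k m` times. -/
def multislice (N r : ℕ) (k : Fin r → ℕ) : Finset (Fin N → Fin r) :=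
  Finset.univ.filter fun x => ∀ m : Fin r,
    (Finset.univ.filter fun ℓ => x ℓ = m).card = k m

/-- The matrix `K`: `(N-1) K m n = k n - 1` if `n = m`, and `k n` otherwise. -/
noncomputable def Kmat (N r : ℕ) (k : Fin r → ℕ) : Fin r → Fin r → ℝ :=
  fun m n => (if n = m then (k n : ℝ) - 1 else (k n : ℝ)) / (N - 1)

/-!
The coordinates of a uniform point of the multislice are exchangeable, since precomposing with a
permutation of `Fin N` preserves the multislice. Double counting `∑ j, [x j = n] = k n` then gives
`P(x i = m) = k m / N` and, for `j ≠ i`, `(N - 1) P(x i = m, x j = n) = P(x i = m) (k n - [n = m])`,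
which is exactly `ν {m} * K m n`.
-/

open Finset

section PermInvariant

variable {ι α : Type*}

lemma card_filter_comp_perm {S : Finset (ι → α)} (hS : ∀ x ∈ S, ∀ σ : Equiv.Perm ι, x ∘ σ ∈ S)
    (σ : Equiv.Perm ι) (p : (ι → α) → Prop) [DecidablePred p] :
    #(S.filter fun x => p (x ∘ σ)) = #(S.filter p) := by
  refine card_nbij' (· ∘ σ) (· ∘ σ.symm) ?_ ?_ ?_ ?_
  · intro x hx
    simp only [coe_filter, Set.mem_ofPred_eq] at hx ⊢
    exact ⟨hS x hx.1 σ, hx.2⟩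
  · intro x hx
    simp only [coe_filter, Set.mem_ofPred_eq] at hx ⊢
    simpa [Function.comp_assoc] using And.intro (hS x hx.1 σ.symm) hx.2
  · intro x _
    simp [Function.comp_assoc]
  · intro x _
    simp [Function.comp_assoc]

lemma card_filter_apply_eq_of_perm [DecidableEq ι] [DecidableEq α] {S : Finset (ι → α)}
    (hS : ∀ x ∈ S, ∀ σ : Equiv.Perm ι, x ∘ σ ∈ S) (i j : ι) (a : α) :
    #(S.filter fun x => x i = a) = #(S.filter fun x => x j = a) := by
  simpa using card_filter_comp_perm hS (Equiv.swap i j) (fun x => x j = a)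

lemma card_filter_apply_eq_and_apply_eq_of_perm [DecidableEq ι] [DecidableEq α]
    {S : Finset (ι → α)} (hS : ∀ x ∈ S, ∀ σ : Equiv.Perm ι, x ∘ σ ∈ S) {i j j' : ι} (hj : j ≠ i) (hj' : j' ≠ i)
    (a b : α) :
    #(S.filter fun x => x i = a ∧ x j' = b) = #(S.filter fun x => x i = a ∧ x j = b) := by
  simpa [Equiv.swap_apply_of_ne_of_ne hj.symm hj'.symm] using
    card_filter_comp_perm hS (Equiv.swap j j') (fun x => x i = a ∧ x j = b)

lemma sum_apply_apply_eq_sum_card_filter {R : Type*} [AddCommMonoid R] [Fintype α]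
    [DecidableEq α] (S : Finset (ι → α)) (i j : ι) (f : α → α → R) :
    ∑ x ∈ S, f (x i) (x j) = ∑ a, ∑ b, #(S.filter fun x => x i = a ∧ x j = b) • f a b := by
  rw [← sum_fiberwise S (fun x => (x i, x j)), Fintype.sum_prod_type]
  refine sum_congr rfl fun a _ => sum_congr rfl fun b _ => ?_
  rw [← sum_const]
  refine sum_congr (by simp) fun x hx => ?_
  simp only [mem_filter] at hx
  rw [hx.2.1, hx.2.2]

end PermInvariant

section Multislice

variable {N r : ℕ} {k : Fin r → ℕ}

@[simp]
lemma mem_multislice {x : Fin N → Fin r} :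
    x ∈ multislice N r k ↔ ∀ m, #(univ.filter fun ℓ => x ℓ = m) = k m := by
  simp [multislice]

lemma comp_perm_mem_multislice :
    ∀ x ∈ multislice N r k, ∀ σ : Equiv.Perm (Fin N), x ∘ σ ∈ multislice N r k := by
  intro x hx σ
  rw [mem_multislice] at hx ⊢
  intro m
  rw [← hx m]
  exact card_equiv σ (by simp)

lemma multislice_nonempty (hk : ∑ m, k m = N) : (multislice N r k).Nonempty := by
  subst hk
  -- the witness lists `k 0` zeros, then `k 1` ones, and so on
  refine ⟨fun ℓ => (finSigmaFinEquiv.symm ℓ).1, mem_multislice.2 fun m => ?_⟩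
  rw [card_equiv (t := univ.filter fun s : (m' : Fin r) × Fin (k m') => s.1 = m)
    finSigmaFinEquiv.symm (by simp), card_filter, Fintype.sum_sigma]
  simp [apply_ite]

lemma sum_card_filter_apply_eq_of_subset {T : Finset (Fin N → Fin r)}
    (hT : T ⊆ multislice N r k) (n : Fin r) :
    ∑ j, #(T.filter fun x => x j = n) = #T * k n := by
  calc ∑ j, #(T.filter fun x => x j = n)
      = ∑ x ∈ T, #(univ.filter fun j => x j = n) := by simp only [card_filter]; exact sum_comm
    _ = ∑ _x ∈ T, k n := sum_congr rfl fun x hx => mem_multislice.1 (hT hx) n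
    _ = #T * k n := by rw [sum_const, smul_eq_mul]

lemma mul_card_filter_apply_eq (i : Fin N) (m : Fin r) :
    N * #((multislice N r k).filter fun x => x i = m) = #(multislice N r k) * k m := by
  rw [← sum_card_filter_apply_eq_of_subset subset_rfl m,
    sum_congr rfl fun j _ => card_filter_apply_eq_of_perm
      (comp_perm_mem_multislice (k := k)) j i m,
    sum_const, card_univ, Fintype.card_fin, smul_eq_mul]

lemma pred_mul_card_filter_apply_eq_and_apply_eq {i j : Fin N} (hij : j ≠ i) (m n : Fin r) :
    (N - 1) * #((multislice N r k).filter fun x => x i = m ∧ x j = n)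
      + (if n = m then #((multislice N r k).filter fun x => x i = m) else 0)
      = #((multislice N r k).filter fun x => x i = m) * k n := by
  rw [← sum_card_filter_apply_eq_of_subset (filter_subset _ _) n,
    ← add_sum_erase _ _ (mem_univ i)]
  simp only [filter_filter]
  rw [sum_congr rfl fun j' hj' => card_filter_apply_eq_and_apply_eq_of_perm
      (comp_perm_mem_multislice (k := k)) hij (ne_of_mem_erase hj') m n,
    sum_const, card_erase_of_mem (mem_univ i), card_univ, Fintype.card_fin, smul_eq_mul,
    add_comm]
  -- what is left is the term `j' = i` of the double count
  split_ifs with hnm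
  · simp [hnm]
  · have : (multislice N r k).filter (fun x => x i = m ∧ x i = n) = ∅ :=
      filter_false_of_mem fun x _ hx => hnm (hx.2.symm.trans hx.1)
    rw [this, card_empty]

lemma Kmat_mul_div_eq_card_filter_div (hk : ∑ m, k m = N) {i j : Fin N} (hij : j ≠ i)
    (m n : Fin r) :
    Kmat N r k m n * (k m / N)
      = #((multislice N r k).filter fun x => x i = m ∧ x j = n) / #(multislice N r k) := by
  have hN : 2 ≤ N := by have := Fin.val_ne_of_ne hij; omega
  have hV : (#(multislice N r k) : ℝ) ≠ 0 := by
    exact_mod_cast (multislice_nonempty hk).card_pos.ne'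
  have hN₀ : (N : ℝ) ≠ 0 := by positivity
  have hN₁ : (N : ℝ) - 1 ≠ 0 := by
    have : (2 : ℝ) ≤ N := by exact_mod_cast hN
    linarith
  have hsingle : (N : ℝ) * #((multislice N r k).filter fun x => x i = m)
      = #(multislice N r k) * k m := by exact_mod_cast mul_card_filter_apply_eq i m
  have hpair : ((N : ℝ) - 1) * #((multislice N r k).filter fun x => x i = m ∧ x j = n)
      + (if n = m then (#((multislice N r k).filter fun x => x i = m) : ℝ) else 0)
      = #((multislice N r k).filter fun x => x i = m) * k n := by
    rw [← Nat.cast_one, ← Nat.cast_sub (by omega)]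
    exact_mod_cast pred_mul_card_filter_apply_eq_and_apply_eq hij m n
  rw [Kmat, div_mul_div_comm, div_eq_div_iff (mul_ne_zero hN₁ hN₀) hV]
  split_ifs at hpair ⊢
  · linear_combination -((k n : ℝ) - 1) * hsingle - (N : ℝ) * hpair
  · linear_combination -(k n : ℝ) * hsingle - (N : ℝ) * hpair

end Multislice

/-- The quadratic form of `K` on `L²(ν)` (with `ν {m} = k m / N`) equals the
correlation `∑_x g(x_1) h(x_N) μ_{N,k}(x)` under the uniform measure on the
multislice. -/
theorem Kmat_quadratic_form (N r : ℕ) (hN : 2 ≤ N) (k : Fin r → ℕ)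
    (hk : ∑ m, k m = N) (g h : Fin r → ℝ) :
    ∑ m, g m * (∑ n, Kmat N r k m n * h n) * ((k m : ℝ) / N)
      = ∑ x ∈ multislice N r k,
          g (x ⟨0, by omega⟩) * h (x ⟨N - 1, by omega⟩)
            * ((multislice N r k).card : ℝ)⁻¹ := by
  have hne : (⟨N - 1, by omega⟩ : Fin N) ≠ ⟨0, by omega⟩ := by
    rw [Ne, Fin.mk.injEq]
    omega
  rw [← sum_mul, sum_apply_apply_eq_sum_card_filter _ _ _ fun a b => g a * h b, sum_mul]
  refine sum_congr rfl fun m _ => ?_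
  rw [mul_sum, sum_mul, sum_mul]
  refine sum_congr rfl fun n _ => ?_
  rw [nsmul_eq_mul]
  linear_combination g m * h n * Kmat_mul_div_eq_card_filter_div hk hne m n
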